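/- arXiv:2109.07932 — 4 statements merged into one kernel-verified Lean document; each statement's English description precedes it below -/
import Mathlib

section
/- If a feasible matching d together with payoffs (u,v) satisfies the stability conditions (u_i ≥ Φ̃_{i0}, v_j ≥ Φ̃_{0j}, u_i + v_j ≥ Φ̃_{ij}, with equality on the support of d), then d maximizes the total joint surplus ∑_{ij} d'_{ij} Φ̃_{ij} + ∑_i d'_{i0} Φ̃_{i0} + ∑_j d'_{0j} Φ̃_{0j} over all feasible matchings d', and the optimal value equals ∑_i u_i + ∑_j v_j. -/
/-!
LP duality: the stable payoffs `(u, v)` are dual feasible, and stability is complementary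
slackness. For every feasible matching, the surplus computed with the split surpluses
`u i + v j`, `u i`, `v j` is `∑ u + ∑ v`. Dual feasibility bounds the true surplus of every
feasible matching by this, and complementary slackness makes the bound an equality for `d`.
-/

open Finset

section Surplus

variable {I J : Type*} [Fintype I] [Fintype J]

def totalSurplus (Φ : I → J → ℝ) (Φm : I → ℝ) (Φw : J → ℝ)
    (d : I → J → ℝ) (dm : I → ℝ) (dw : J → ℝ) : ℝ :=
  ∑ i, ∑ j, d i j * Φ i j + ∑ i, dm i * Φm i + ∑ j, dw j * Φw j

theorem totalSurplus_mono {Φ Ψ : I → J → ℝ} {Φm Ψm : I → ℝ} {Φw Ψw : J → ℝ}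
    {d : I → J → ℝ} {dm : I → ℝ} {dw : J → ℝ}
    (hd : ∀ i j, 0 ≤ d i j) (hdm : ∀ i, 0 ≤ dm i) (hdw : ∀ j, 0 ≤ dw j)
    (h : ∀ i j, Φ i j ≤ Ψ i j) (hm : ∀ i, Φm i ≤ Ψm i) (hw : ∀ j, Φw j ≤ Ψw j) :
    totalSurplus Φ Φm Φw d dm dw ≤ totalSurplus Ψ Ψm Ψw d dm dw := by
  unfold totalSurplus
  gcongr with i _ j _ i _ j _
  exacts [hd i j, h i j, hdm i, hm i, hdw j, hw j]

theorem mul_eq_mul_of_nonneg_of_pos_imp {x a b : ℝ} (hx : 0 ≤ x) (h : 0 < x → a = b) :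
    x * a = x * b := by
  rcases hx.eq_or_lt with rfl | hpos
  · simp
  · rw [h hpos]

theorem totalSurplus_congr_on_support {Φ Ψ : I → J → ℝ} {Φm Ψm : I → ℝ} {Φw Ψw : J → ℝ}
    {d : I → J → ℝ} {dm : I → ℝ} {dw : J → ℝ}
    (hd : ∀ i j, 0 ≤ d i j) (hdm : ∀ i, 0 ≤ dm i) (hdw : ∀ j, 0 ≤ dw j)
    (h : ∀ i j, 0 < d i j → Φ i j = Ψ i j) (hm : ∀ i, 0 < dm i → Φm i = Ψm i)
    (hw : ∀ j, 0 < dw j → Φw j = Ψw j) :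
    totalSurplus Φ Φm Φw d dm dw = totalSurplus Ψ Ψm Ψw d dm dw := by
  unfold totalSurplus
  refine congrArg₂ (· + ·) (congrArg₂ (· + ·) ?_ ?_) ?_
  · exact sum_congr rfl fun i _ => sum_congr rfl fun j _ =>
      mul_eq_mul_of_nonneg_of_pos_imp (hd i j) (h i j)
  · exact sum_congr rfl fun i _ => mul_eq_mul_of_nonneg_of_pos_imp (hdm i) (hm i)
  · exact sum_congr rfl fun j _ => mul_eq_mul_of_nonneg_of_pos_imp (hdw j) (hw j)

theorem totalSurplus_split_eq_sum_add_sum (u : I → ℝ) (v : J → ℝ)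
    {d : I → J → ℝ} {dm : I → ℝ} {dw : J → ℝ}
    (hI : ∀ i, ∑ j, d i j + dm i = 1) (hJ : ∀ j, ∑ i, d i j + dw j = 1) :
    totalSurplus (fun i j => u i + v j) u v d dm dw = ∑ i, u i + ∑ j, v j := by
  have hu : ∀ i, ∑ j, d i j * u i + dm i * u i = u i := fun i => by
    rw [← sum_mul, ← add_mul, hI i, one_mul]
  have hv : ∀ j, ∑ i, d i j * v j + dw j * v j = v j := fun j => by
    rw [← sum_mul, ← add_mul, hJ j, one_mul]
  calc totalSurplus (fun i j => u i + v j) u v d dm dw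
      = ∑ i, (∑ j, d i j * u i + dm i * u i) + ∑ j, (∑ i, d i j * v j + dw j * v j) := by
        simp only [totalSurplus, mul_add, sum_add_distrib]
        rw [sum_comm (f := fun i j => d i j * v j)]
        ring
    _ = ∑ i, u i + ∑ j, v j := by simp only [hu, hv]

end Surplus

/-- If a feasible matching `d` with payoffs `(u, v)` satisfies the stability conditions
(with equality on the support of `d`), then `d` maximizes total joint surplus over all
feasible matchings, and the optimal value equals `∑ᵢ uᵢ + ∑ⱼ vⱼ`. -/
theorem stable_implies_optimal
    {I J : Type*} [Fintype I] [Fintype J]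
    (Φ : I → J → ℝ) (Φm : I → ℝ) (Φw : J → ℝ)
    (d : I → J → ℝ) (dm : I → ℝ) (dw : J → ℝ)
    (u : I → ℝ) (v : J → ℝ)
    (hd : ∀ i j, 0 ≤ d i j) (hdm : ∀ i, 0 ≤ dm i) (hdw : ∀ j, 0 ≤ dw j)
    (hfeasI : ∀ i, ∑ j, d i j + dm i = 1)
    (hfeasJ : ∀ j, ∑ i, d i j + dw j = 1)
    -- stability conditions
    (hum : ∀ i, u i ≥ Φm i) (hvm : ∀ j, v j ≥ Φw j)
    (huv : ∀ i j, u i + v j ≥ Φ i j)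
    (hum' : ∀ i, dm i > 0 → u i = Φm i)
    (hvm' : ∀ j, dw j > 0 → v j = Φw j)
    (huv' : ∀ i j, d i j > 0 → u i + v j = Φ i j) :
    (∀ (d' : I → J → ℝ) (dm' : I → ℝ) (dw' : J → ℝ),
      (∀ i j, 0 ≤ d' i j) → (∀ i, 0 ≤ dm' i) → (∀ j, 0 ≤ dw' j) →
      (∀ i, ∑ j, d' i j + dm' i = 1) → (∀ j, ∑ i, d' i j + dw' j = 1) →
      ∑ i, ∑ j, d' i j * Φ i j + ∑ i, dm' i * Φm i + ∑ j, dw' j * Φw j ≤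
        ∑ i, ∑ j, d i j * Φ i j + ∑ i, dm i * Φm i + ∑ j, dw j * Φw j) ∧
    ∑ i, ∑ j, d i j * Φ i j + ∑ i, dm i * Φm i + ∑ j, dw j * Φw j =
      ∑ i, u i + ∑ j, v j := by
  have hvalue : totalSurplus Φ Φm Φw d dm dw = ∑ i, u i + ∑ j, v j := by
    rw [← totalSurplus_split_eq_sum_add_sum u v hfeasI hfeasJ]
    exact totalSurplus_congr_on_support hd hdm hdw
      (fun i j h => (huv' i j h).symm) (fun i h => (hum' i h).symm) (fun j h => (hvm' j h).symm)
  refine ⟨fun d' dm' dw' hd' hdm' hdw' hI' hJ' => ?_, hvalue⟩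
  change totalSurplus Φ Φm Φw d' dm' dw' ≤ totalSurplus Φ Φm Φw d dm dw
  calc totalSurplus Φ Φm Φw d' dm' dw'
      ≤ totalSurplus (fun i j => u i + v j) u v d' dm' dw' :=
        totalSurplus_mono hd' hdm' hdw' huv hum hvm
    _ = totalSurplus Φ Φm Φw d dm dw := by
        rw [totalSurplus_split_eq_sum_add_sum u v hI' hJ', hvalue]
end

section
/- Under separability, the constraint u_i + v_j ≥ Φ̃_{ij} for all i, j is equivalent to U_{x y} + V_{x y} ≥ Φ_{x y} for all types x, y, where U_{xy} = min over men i of type x of (u_i − ε_{iy}) and V_{xy} = min over women j of type y of (v_j − η_{jx}). -/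
open Finset

theorem Finset.le_inf'_add_inf'_iff {α β G : Type*} [AddCommGroup G] [LinearOrder G]
    [IsOrderedAddMonoid G] {s : Finset α} {t : Finset β} (hs : s.Nonempty) (ht : t.Nonempty)
    (f : α → G) (g : β → G) (c : G) :
    c ≤ s.inf' hs f + t.inf' ht g ↔ ∀ i ∈ s, ∀ j ∈ t, c ≤ f i + g j := by
  rw [← sub_le_iff_le_add, le_inf'_iff]
  refine forall₂_congr fun i _ => ?_
  rw [sub_le_comm, le_inf'_iff]
  exact forall₂_congr fun j _ => sub_le_iff_le_add'

/-- Under separability, the individual-level constraints `uᵢ + vⱼ ≥ Φ̃ᵢⱼ` are equivalent to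
the type-level constraints `U_{xy} + V_{xy} ≥ Φ_{xy}`, where
`U_{xy} = min_{i : xᵢ = x} (uᵢ − ε_{iy})` and `V_{xy} = min_{j : yⱼ = y} (vⱼ − η_{jx})`. -/
theorem separability_constraint_equiv
    {I J X Y : Type*} [Fintype I] [Fintype J]
    [DecidableEq X] [DecidableEq Y]
    (xt : I → X) (yt : J → Y)
    (hX : ∀ x : X, ∃ i, xt i = x) (hY : ∀ y : Y, ∃ j, yt j = y)
    (Φ : X → Y → ℝ) (ε : I → Y → ℝ) (η : J → X → ℝ)
    (u : I → ℝ) (v : J → ℝ)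
    (U : X → Y → ℝ) (V : X → Y → ℝ)
    (hU : ∀ x y, U x y =
      ({i | xt i = x} : Finset I).inf' ⟨(hX x).choose, by simp [(hX x).choose_spec]⟩ (fun i => u i - ε i y))
    (hV : ∀ x y, V x y =
      ({j | yt j = y} : Finset J).inf' ⟨(hY y).choose, by simp [(hY y).choose_spec]⟩ (fun j => v j - η j x)) :
    (∀ i j, u i + v j ≥ Φ (xt i) (yt j) + ε i (yt j) + η j (xt i)) ↔
    (∀ x y, U x y + V x y ≥ Φ x y) := by
  simp only [hU, hV, ge_iff_le]
  constructor
  · intro h x y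
    refine (le_inf'_add_inf'_iff _ _ _ _ _).2 ?_
    simp only [mem_filter, mem_univ, true_and]
    rintro i rfl j rfl
    linarith [h i j]
  · intro h i j
    have := (le_inf'_add_inf'_iff _ _ _ _ _).1 (h (xt i) (yt j)) i (by simp) j (by simp)
    linarith
end

section
/- The Legendre–Fenchel transform of the function G(U) = n·log(1 + ∑_{y ∈ 𝒴} exp(U_y)) (with n > 0) evaluated at μ ∈ ℝ^𝒴 equals ∑_y μ_y log(μ_y/n) + (n − ∑_y μ_y) log((n − ∑_y μ_y)/n) if μ_y ≥ 0 for all y and ∑_y μ_y ≤ n (with the convention 0 log 0 = 0), and equals +∞ otherwise. -/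
open Finset

lemma key_ineq (x c : ℝ) (hx : 0 ≤ x) (hc : 0 < c) :
    x * Real.log c - x * Real.log x ≤ c - x := by
  rcases eq_or_lt_of_le hx with h | h
  · simp [← h, hc.le]
  · have h1 : Real.log (c / x) ≤ c / x - 1 := Real.log_le_sub_one_of_pos (by positivity)
    rw [Real.log_div hc.ne' h.ne'] at h1
    have := mul_le_mul_of_nonneg_left h1 h.le
    calc x * Real.log c - x * Real.log x = x * (Real.log c - Real.log x) := by ring
    _ ≤ x * (c / x - 1) := this
    _ = c - x := by field_simp

lemma log_div_expand (x c : ℝ) (hx : 0 ≤ x) (hc : 0 < c) :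
    x * Real.log (x / c) = x * Real.log x - x * Real.log c := by
  rcases eq_or_lt_of_le hx with h | h
  · simp [← h]
  · rw [Real.log_div h.ne' hc.ne']; ring

lemma legendre_ub {Y : Type*} [Fintype Y] [Nonempty Y]
    (n : ℝ) (hn : 0 < n) (μ : Y → ℝ)
    (hpos : ∀ y, 0 ≤ μ y) (hs : ∑ y, μ y ≤ n) (U : Y → ℝ) :
    ∑ y, μ y * U y - n * Real.log (1 + ∑ y, Real.exp (U y)) ≤
      ∑ y, μ y * Real.log (μ y / n) +
        (n - ∑ y, μ y) * Real.log ((n - ∑ y, μ y) / n) := by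
  set s := ∑ y, μ y with hsdef
  set S := 1 + ∑ y, Real.exp (U y) with hSdef
  have hsum_exp : 0 ≤ ∑ y, Real.exp (U y) := sum_nonneg fun y _ => (Real.exp_pos _).le
  have hS : 0 < S := by rw [hSdef]; linarith
  have hterm : ∀ y ∈ univ, μ y * U y ≤
      μ y * Real.log (μ y / n) + μ y * Real.log S + (n * Real.exp (U y) / S - μ y) := by
    intro y _
    have hc : 0 < n * Real.exp (U y) / S := by positivity
    have hlogc : Real.log (n * Real.exp (U y) / S) = Real.log n + U y - Real.log S := by
      rw [Real.log_div (by positivity) hS.ne', Real.log_mul hn.ne' (Real.exp_pos _).ne',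
        Real.log_exp]
    have k1 := key_ineq (μ y) _ (hpos y) hc
    rw [hlogc] at k1
    rw [log_div_expand _ _ (hpos y) hn]
    have hexp : μ y * (Real.log n + U y - Real.log S)
        = μ y * Real.log n + μ y * U y - μ y * Real.log S := by ring
    linarith [k1, hexp ▸ k1]
  have hsum := Finset.sum_le_sum hterm
  have hsplit : ∑ y, (μ y * Real.log (μ y / n) + μ y * Real.log S +
      (n * Real.exp (U y) / S - μ y))
      = ∑ y, μ y * Real.log (μ y / n) + s * Real.log S + (n * (S - 1) / S - s) := by
    rw [Finset.sum_add_distrib, Finset.sum_add_distrib, Finset.sum_sub_distrib,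
      ← Finset.sum_mul]
    have : ∑ y, n * Real.exp (U y) / S = n * (S - 1) / S := by
      rw [← Finset.sum_div, ← Finset.mul_sum]
      congr 2
      rw [hSdef]; ring
    rw [this]
  rw [hsplit] at hsum
  have h2 := key_ineq (n - s) (n / S) (by linarith) (by positivity)
  rw [Real.log_div hn.ne' hS.ne'] at h2
  rw [log_div_expand _ _ (by linarith : (0:ℝ) ≤ n - s) hn]
  have hexp2 : (n - s) * (Real.log n - Real.log S)
      = (n - s) * Real.log n - (n - s) * Real.log S := by ring
  rw [hexp2] at h2
  have hfrac : n * (S - 1) / S = n - n / S := by field_simp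
  rw [hfrac] at hsum
  linarith

lemma legendre_lb {Y : Type*} [Fintype Y] [Nonempty Y]
    (n : ℝ) (hn : 0 < n) (μ : Y → ℝ)
    (hpos : ∀ y, 0 ≤ μ y) (hs : ∑ y, μ y ≤ n) (f : (Y → ℝ) → ℝ)
    (hf : ∀ U, f U = ∑ y, μ y * U y - n * Real.log (1 + ∑ y, Real.exp (U y)))
    (hbdd : BddAbove (Set.range f)) :
    ∑ y, μ y * Real.log (μ y / n) + (n - ∑ y, μ y) * Real.log ((n - ∑ y, μ y) / n)
      ≤ ⨆ U, f U := by
  set s := ∑ y, μ y with hsdef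
  have hsnn : 0 ≤ s := Finset.sum_nonneg fun y _ => hpos y
  have hRalt : ∑ y, μ y * Real.log (μ y / n) + (n - s) * Real.log ((n - s) / n)
      = ∑ y, μ y * Real.log (μ y) + (n - s) * Real.log (n - s) - n * Real.log n := by
    rw [log_div_expand (n - s) n (by linarith) hn,
      Finset.sum_congr rfl fun y _ => log_div_expand (μ y) n (hpos y) hn,
      Finset.sum_sub_distrib, ← Finset.sum_mul, ← hsdef]
    ring
  rw [hRalt]
  have hk : (0:ℝ) < (Fintype.card Y : ℝ) := by
    exact_mod_cast Fintype.card_pos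
  set c : ℝ := n / (2 * (Fintype.card Y : ℝ)) with hc
  have hcpos : 0 < c := by positivity
  set m : ℝ → Y → ℝ := fun t y => (1 - t) * μ y + t * c with hm
  set σ : ℝ → ℝ := fun t => (1 - t) * s + t * (n / 2) with hσ
  have hσsum : ∀ t, ∑ y, m t y = σ t := by
    intro t
    simp only [hm, hσ]
    rw [Finset.sum_add_distrib, ← Finset.mul_sum, Finset.sum_const, card_univ,
      nsmul_eq_mul, ← hsdef]
    have : (Fintype.card Y : ℝ) * (t * c) = t * (n / 2) := by
      rw [hc]; field_simp
    rw [this]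
  have hmpos : ∀ t ∈ Set.Ioc (0:ℝ) 1, ∀ y, 0 < m t y := by
    intro t ht y
    have h1 : 0 ≤ (1 - t) * μ y := mul_nonneg (by linarith [ht.2]) (hpos y)
    have h2 : 0 < t * c := mul_pos ht.1 hcpos
    simp only [hm]; linarith
  have hσlt : ∀ t ∈ Set.Ioc (0:ℝ) 1, 0 < n - σ t := by
    intro t ht
    have h1 : (1 - t) * s ≤ (1 - t) * n := mul_le_mul_of_nonneg_left hs (by linarith [ht.2])
    have h2 : 0 < t * (n / 2) := mul_pos ht.1 (by positivity)
    simp only [hσ]; nlinarith [ht.1]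
  set V : ℝ → Y → ℝ := fun t y => Real.log (m t y) - Real.log (n - σ t) with hV
  have hfV : ∀ t ∈ Set.Ioc (0:ℝ) 1, f (V t) =
      ∑ y, μ y * Real.log (m t y) + (n - s) * Real.log (n - σ t) - n * Real.log n := by
    intro t ht
    have hns := hσlt t ht
    rw [hf]
    have h1 : ∑ y, Real.exp (V t y) = σ t / (n - σ t) := by
      have : ∀ y ∈ univ, Real.exp (V t y) = m t y / (n - σ t) := by
        intro y _
        simp only [hV]
        rw [Real.exp_sub, Real.exp_log (hmpos t ht y), Real.exp_log hns]
      rw [Finset.sum_congr rfl this, ← Finset.sum_div, hσsum]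
    rw [h1]
    have h2 : 1 + σ t / (n - σ t) = n / (n - σ t) := by field_simp; ring
    rw [h2, Real.log_div hn.ne' hns.ne']
    have h3 : ∑ y, μ y * V t y
        = ∑ y, μ y * Real.log (m t y) - s * Real.log (n - σ t) := by
      simp only [hV, mul_sub]
      rw [Finset.sum_sub_distrib, ← Finset.sum_mul, ← hsdef]
    rw [h3]; ring
  have htend : Filter.Tendsto
      (fun t => ∑ y, μ y * Real.log (m t y) + (n - s) * Real.log (n - σ t) - n * Real.log n)
      (nhdsWithin 0 (Set.Ioi 0))
      (nhds (∑ y, μ y * Real.log (μ y) + (n - s) * Real.log (n - s) - n * Real.log n)) := by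
    apply Filter.Tendsto.sub _ tendsto_const_nhds
    apply Filter.Tendsto.add
    · apply tendsto_finset_sum
      intro y _
      rcases eq_or_lt_of_le (hpos y) with h | h
      · simp only [← h, zero_mul]; exact tendsto_const_nhds
      · have hmt : Filter.Tendsto (fun t => m t y) (nhdsWithin 0 (Set.Ioi 0)) (nhds (μ y)) := by
          have hcont : Continuous fun t : ℝ => (1 - t) * μ y + t * c :=
            ((continuous_const.sub continuous_id).mul continuous_const).add
              (continuous_id.mul continuous_const)
          have h0 : Filter.Tendsto (fun t : ℝ => (1 - t) * μ y + t * c)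
              (nhdsWithin 0 (Set.Ioi 0)) (nhds ((1 - 0) * μ y + 0 * c)) :=
            (hcont.tendsto 0).mono_left nhdsWithin_le_nhds
          simpa using h0
        exact ((Real.continuousAt_log h.ne').tendsto.comp hmt).const_mul _
    · rcases eq_or_lt_of_le hs with h | h
      · simp only [h, sub_self, zero_mul]; exact tendsto_const_nhds
      · have hmt : Filter.Tendsto (fun t => n - σ t) (nhdsWithin 0 (Set.Ioi 0))
            (nhds (n - s)) := by
          have hcont : Continuous fun t : ℝ => n - ((1 - t) * s + t * (n / 2)) :=
            continuous_const.sub (((continuous_const.sub continuous_id).mul continuous_const).add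
              (continuous_id.mul continuous_const))
          have h0 : Filter.Tendsto (fun t : ℝ => n - ((1 - t) * s + t * (n / 2)))
              (nhdsWithin 0 (Set.Ioi 0)) (nhds (n - ((1 - 0) * s + 0 * (n / 2)))) :=
            (hcont.tendsto 0).mono_left nhdsWithin_le_nhds
          simpa using h0
        exact ((Real.continuousAt_log (by linarith : n - s ≠ 0)).tendsto.comp hmt).const_mul _
  refine le_of_tendsto htend ?_
  have hmem : Set.Ioc (0:ℝ) 1 ∈ nhdsWithin 0 (Set.Ioi (0:ℝ)) :=
    Ioc_mem_nhdsGT_of_mem (by norm_num)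
  filter_upwards [hmem] with t ht
  rw [← hfV t ht]
  exact le_ciSup hbdd (V t)

/-- Legendre–Fenchel transform of `G(U) = n·log(1 + ∑_y exp(U_y))` with `n > 0`:
it equals the entropy expression `∑_y μ_y log(μ_y/n) + (n − ∑_y μ_y) log((n − ∑_y μ_y)/n)`
when `μ ≥ 0` and `∑_y μ_y ≤ n` (with `0·log 0 = 0`), and is `+∞` (unbounded) otherwise. -/
theorem legendre_of_logit
    {Y : Type*} [Fintype Y] [Nonempty Y]
    (n : ℝ) (hn : 0 < n) (μ : Y → ℝ)
    (f : (Y → ℝ) → ℝ)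
    (hf : ∀ U, f U = ∑ y, μ y * U y - n * Real.log (1 + ∑ y, Real.exp (U y))) :
    (((∀ y, 0 ≤ μ y) ∧ ∑ y, μ y ≤ n) →
      BddAbove (Set.range f) ∧
      (⨆ U, f U) =
        ∑ y, μ y * Real.log (μ y / n) +
          (n - ∑ y, μ y) * Real.log ((n - ∑ y, μ y) / n)) ∧
    (¬ ((∀ y, 0 ≤ μ y) ∧ ∑ y, μ y ≤ n) → ¬ BddAbove (Set.range f)) := by
  constructor
  · rintro ⟨hpos, hs⟩
    have hub : ∀ U, f U ≤ ∑ y, μ y * Real.log (μ y / n) +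
        (n - ∑ y, μ y) * Real.log ((n - ∑ y, μ y) / n) := fun U => by
      rw [hf]; exact legendre_ub n hn μ hpos hs U
    have hbdd : BddAbove (Set.range f) := by
      refine ⟨∑ y, μ y * Real.log (μ y / n) +
        (n - ∑ y, μ y) * Real.log ((n - ∑ y, μ y) / n), ?_⟩
      rintro x ⟨U, rfl⟩
      exact hub U
    exact ⟨hbdd, le_antisymm (ciSup_le hub) (legendre_lb n hn μ hpos hs f hf hbdd)⟩
  · intro h
    classical
    rw [not_bddAbove_iff]
    intro M
    have hk1 : (1:ℝ) ≤ (Fintype.card Y : ℝ) := by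
      exact_mod_cast Fintype.card_pos
    set k : ℝ := (Fintype.card Y : ℝ) with hkdef
    set C : ℝ := n * Real.log (1 + k) with hCdef
    have hC : 0 ≤ C := mul_nonneg hn.le (Real.log_nonneg (by linarith))
    rcases not_and_or.mp h with h | h
    · push_neg at h
      obtain ⟨y₀, hy₀⟩ := h
      set t : ℝ := max 1 ((M + C) / (-μ y₀) + 1) with htdef
      have ht1 : (1:ℝ) ≤ t := le_max_left _ _
      have ht2 : (M + C) / (-μ y₀) < t := lt_of_lt_of_le (by linarith) (le_max_right _ _)
      have hμ0 : 0 < -μ y₀ := by linarith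
      have htM : M + C < t * (-μ y₀) := (div_lt_iff₀ hμ0).mp ht2
      set U : Y → ℝ := fun y => if y = y₀ then -t else 0 with hU
      refine ⟨f U, Set.mem_range_self U, ?_⟩
      rw [hf]
      have hsum1 : ∑ y, μ y * U y = μ y₀ * (-t) := by
        simp only [hU, mul_ite, mul_zero]
        rw [Finset.sum_ite_eq' univ y₀]
        simp
      have hsum2 : ∑ y, Real.exp (U y) ≤ k := by
        calc ∑ y, Real.exp (U y) ≤ ∑ y : Y, 1 := by
              refine Finset.sum_le_sum fun y _ => ?_
              rw [Real.exp_le_one_iff, hU]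
              by_cases hy : y = y₀ <;> simp [hy] <;> linarith
        _ = k := by rw [Finset.sum_const, card_univ, hkdef]; simp
      have hlog : Real.log (1 + ∑ y, Real.exp (U y)) ≤ Real.log (1 + k) := by
        have hpos' : 0 < 1 + ∑ y, Real.exp (U y) := by
          have : 0 ≤ ∑ y, Real.exp (U y) := sum_nonneg fun y _ => (Real.exp_pos _).le
          linarith
        exact Real.log_le_log hpos' (by linarith)
      have := mul_le_mul_of_nonneg_left hlog hn.le
      rw [hsum1]
      nlinarith
    · push_neg at h
      set s := ∑ y, μ y with hsdef
      set t : ℝ := max 1 ((M + C) / (s - n) + 1) with htdef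
      have ht1 : (1:ℝ) ≤ t := le_max_left _ _
      have ht2 : (M + C) / (s - n) < t := lt_of_lt_of_le (by linarith) (le_max_right _ _)
      have hsn : 0 < s - n := by linarith
      have htM : M + C < t * (s - n) := (div_lt_iff₀ hsn).mp ht2
      set U : Y → ℝ := fun _ => t with hU
      refine ⟨f U, Set.mem_range_self U, ?_⟩
      rw [hf]
      have hsum1 : ∑ y, μ y * U y = s * t := by
        simp only [hU]
        rw [← Finset.sum_mul, ← hsdef]
      have hsum2 : ∑ y, Real.exp (U y) = k * Real.exp t := by
        simp only [hU]
        rw [Finset.sum_const, card_univ, nsmul_eq_mul, hkdef]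
      have hexp1 : (1:ℝ) ≤ Real.exp t := by
        rw [← Real.exp_zero]
        exact Real.exp_le_exp.mpr (by linarith)
      have hlog : Real.log (1 + k * Real.exp t) ≤ Real.log (1 + k) + t := by
        have h1 : 1 + k * Real.exp t ≤ (1 + k) * Real.exp t := by nlinarith
        have h2 : 0 < 1 + k * Real.exp t := by nlinarith
        calc Real.log (1 + k * Real.exp t) ≤ Real.log ((1 + k) * Real.exp t) :=
              Real.log_le_log h2 h1
        _ = Real.log (1 + k) + t := by
              rw [Real.log_mul (by linarith) (Real.exp_pos t).ne', Real.log_exp]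
      rw [hsum1, hsum2]
      have := mul_le_mul_of_nonneg_left hlog hn.le
      nlinarith
end

section
/- The logit IPFP system has a solution: for any finite sets 𝒳, 𝒴, positive margins n_x, m_y, and positive matrix S_{xy}, there exist positive vectors a ∈ ℝ^𝒳 and b ∈ ℝ^𝒴 such that a_x² + a_x ∑_y b_y S_{xy} = n_x for all x and b_y² + b_y ∑_x a_x S_{xy} = m_y for all y. -/
open Finset

noncomputable def ipfpRoot (c t : ℝ) : ℝ := 2 * t / (c + Real.sqrt (c ^ 2 + 4 * t))

lemma ipfpRoot_den_pos {c t : ℝ} (hc : 0 ≤ c) (ht : 0 < t) :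
    0 < c + Real.sqrt (c ^ 2 + 4 * t) := by
  have : 0 < Real.sqrt (c ^ 2 + 4 * t) := Real.sqrt_pos.2 (by nlinarith)
  linarith

lemma ipfpRoot_pos {c t : ℝ} (hc : 0 ≤ c) (ht : 0 < t) : 0 < ipfpRoot c t :=
  div_pos (by linarith) (ipfpRoot_den_pos hc ht)

lemma ipfpRoot_spec {c t : ℝ} (hc : 0 ≤ c) (ht : 0 < t) :
    ipfpRoot c t ^ 2 + ipfpRoot c t * c = t := by
  have hD : Real.sqrt (c ^ 2 + 4 * t) ^ 2 = c ^ 2 + 4 * t :=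
    Real.sq_sqrt (by nlinarith)
  have hd := ipfpRoot_den_pos hc ht
  have hd2 : (c + Real.sqrt (c ^ 2 + 4 * t)) ^ 2
      = 2 * c * (c + Real.sqrt (c ^ 2 + 4 * t)) + 4 * t := by nlinarith [hD]
  unfold ipfpRoot
  field_simp
  rw [mul_comm t 4]
  linear_combination (-1 : ℝ) * hd2

lemma ipfpRoot_anti {c c' t : ℝ} (hc : 0 ≤ c) (hcc : c ≤ c') (ht : 0 < t) :
    ipfpRoot c' t ≤ ipfpRoot c t := by
  have hc' : 0 ≤ c' := le_trans hc hcc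
  have hden : c + Real.sqrt (c ^ 2 + 4 * t) ≤ c' + Real.sqrt (c' ^ 2 + 4 * t) :=
    add_le_add hcc (Real.sqrt_le_sqrt (by nlinarith))
  exact div_le_div_of_nonneg_left (by linarith) (ipfpRoot_den_pos hc ht) hden

lemma ipfpRoot_le_sqrt {c t : ℝ} (hc : 0 ≤ c) (ht : 0 < t) :
    ipfpRoot c t ≤ Real.sqrt t := by
  have h0 : ipfpRoot 0 t = Real.sqrt t := by
    unfold ipfpRoot
    have h4 : (0:ℝ) ^ 2 + 4 * t = 4 * t := by ring
    rw [h4, show (4:ℝ) * t = 2 ^ 2 * t by ring, Real.sqrt_mul (by norm_num),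
      Real.sqrt_sq (by norm_num)]
    rw [zero_add]
    rw [show (2:ℝ) * t / (2 * Real.sqrt t) = t / Real.sqrt t by
      rw [mul_div_mul_left _ _ (by norm_num)]]
    exact Real.div_sqrt
  calc ipfpRoot c t ≤ ipfpRoot 0 t := ipfpRoot_anti le_rfl hc ht
    _ = Real.sqrt t := h0

/-- Existence of a solution to the logit IPFP system: for positive margins `n, m` and a
positive matrix `S`, there exist positive `a, b` with `a_x² + a_x ∑_y b_y S_{xy} = n_x`
and `b_y² + b_y ∑_x a_x S_{xy} = m_y`. -/
theorem ipfp_existence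
    {X Y : Type*} [Fintype X] [Fintype Y] [Nonempty X] [Nonempty Y]
    (S : X → Y → ℝ) (n : X → ℝ) (m : Y → ℝ)
    (hS : ∀ x y, 0 < S x y) (hn : ∀ x, 0 < n x) (hm : ∀ y, 0 < m y) :
    ∃ (a : X → ℝ) (b : Y → ℝ), (∀ x, 0 < a x) ∧ (∀ y, 0 < b y) ∧
      (∀ x, a x ^ 2 + a x * ∑ y, b y * S x y = n x) ∧
      (∀ y, b y ^ 2 + b y * ∑ x, a x * S x y = m y) := by
  classical
  haveI : ∀ y : Y, Fact ((0:ℝ) ≤ Real.sqrt (m y)) := fun y => ⟨Real.sqrt_nonneg _⟩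
  -- the map from women's shares to men's shares
  set A : (Y → ℝ) → X → ℝ := fun b x => ipfpRoot (∑ y, b y * S x y) (n x) with hA
  have hcsum : ∀ (b : Y → ℝ), (∀ y, 0 ≤ b y) → ∀ x, 0 ≤ ∑ y, b y * S x y := by
    intro b hb x
    exact Finset.sum_nonneg fun y _ => mul_nonneg (hb y) (hS x y).le
  have hApos : ∀ (b : Y → ℝ), (∀ y, 0 ≤ b y) → ∀ x, 0 < A b x := by
    intro b hb x
    exact ipfpRoot_pos (hcsum b hb x) (hn x)
  have hAanti : ∀ (b b' : Y → ℝ), (∀ y, 0 ≤ b y) → (∀ y, b y ≤ b' y) →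
      ∀ x, A b' x ≤ A b x := by
    intro b b' hb hbb x
    refine ipfpRoot_anti (hcsum b hb x) ?_ (hn x)
    exact Finset.sum_le_sum fun y _ => mul_le_mul_of_nonneg_right (hbb y) (hS x y).le
  have hdsum : ∀ (a : X → ℝ), (∀ x, 0 ≤ a x) → ∀ y, 0 ≤ ∑ x, a x * S x y := by
    intro a ha y
    exact Finset.sum_nonneg fun x _ => mul_nonneg (ha x) (hS x y).le
  -- the IPFP map on the complete lattice ∏ y, [0, √(m y)]
  set L := ∀ y : Y, Set.Icc (0:ℝ) (Real.sqrt (m y)) with hL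
  set Φ : L → L := fun b y =>
    ⟨ipfpRoot (∑ x, A (fun y' => (b y' : ℝ)) x * S x y) (m y),
      (ipfpRoot_pos (hdsum _ (fun x => (hApos _ (fun y' => (b y').2.1) x).le) y) (hm y)).le,
      ipfpRoot_le_sqrt (hdsum _ (fun x => (hApos _ (fun y' => (b y').2.1) x).le) y) (hm y)⟩
    with hΦ
  have hmono : Monotone Φ := by
    intro b b' hbb
    intro y
    have hb0 : ∀ y', (0:ℝ) ≤ (b y' : ℝ) := fun y' => (b y').2.1
    have hb'0 : ∀ y', (0:ℝ) ≤ (b' y' : ℝ) := fun y' => (b' y').2.1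
    have hle : ∀ y', ((b y' : ℝ)) ≤ (b' y' : ℝ) := fun y' => hbb y'
    have hAle : ∀ x, A (fun y' => (b' y' : ℝ)) x ≤ A (fun y' => (b y' : ℝ)) x :=
      hAanti _ _ hb0 hle
    have hsum : ∑ x, A (fun y' => (b' y' : ℝ)) x * S x y ≤
        ∑ x, A (fun y' => (b y' : ℝ)) x * S x y :=
      Finset.sum_le_sum fun x _ => mul_le_mul_of_nonneg_right (hAle x) (hS x y).le
    show ((Φ b) y : ℝ) ≤ ((Φ b') y : ℝ)
    exact ipfpRoot_anti (hdsum _ (fun x => (hApos _ hb'0 x).le) y) hsum (hm y)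
  -- Knaster–Tarski
  let f : L →o L := ⟨Φ, hmono⟩
  have hfix : Φ f.lfp = f.lfp := f.map_lfp
  set b : Y → ℝ := fun y => (f.lfp y : ℝ) with hb
  have hb0 : ∀ y, 0 ≤ b y := fun y => (f.lfp y).2.1
  set a : X → ℝ := fun x => A b x with ha
  have ha0 : ∀ x, 0 < a x := hApos b hb0
  have hbfix : ∀ y, b y = ipfpRoot (∑ x, a x * S x y) (m y) := by
    intro y
    have := congrFun hfix y
    exact (congrArg Subtype.val this).symm
  refine ⟨a, b, ha0, ?_, ?_, ?_⟩
  · intro y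
    rw [hbfix y]
    exact ipfpRoot_pos (hdsum a (fun x => (ha0 x).le) y) (hm y)
  · intro x
    exact ipfpRoot_spec (hcsum b hb0 x) (hn x)
  · intro y
    rw [hbfix y]
    exact ipfpRoot_spec (hdsum a (fun x => (ha0 x).le) y) (hm y)
end
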